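/- Let d ≥ 1, α ∈ (0,2), δ ∈ (0,1), c₀ > 0 and let ξ ∈ ℝ^d with |ξ| = 1. Set V_ξ = {z ∈ ℝ^d : |z| ≤ 1 and ⟨z, ξ⟩ ≥ δ|z|} and q(z) = c₀ |z|^{−(d+α)} 1_{V_ξ}(z). Then there exist constants c₁ > 0 and r₀ ∈ (0,1) such that for every x ∈ ℝ^d with 0 < |x| ≤ r₀, ∫_{ℝ^d} min(q(z), q(x+z)) dz ≥ c₁ |x|^{−α}, where the integral is with respect to Lebesgue measure. -/

import Mathlib

open MeasureTheory Set
open scoped Pointwise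
open scoped RealInnerProductSpace

noncomputable section

/-- `ℝ^d` as a Euclidean space. -/
abbrev Ed (d : ℕ) := EuclideanSpace ℝ (Fin d)

/-- `q(z) = c₀ |z|^{−(d+α)} 1_{V_ξ}(z)` where
`V_ξ = {z : |z| ≤ 1, ⟨z, ξ⟩ ≥ δ|z|}`. -/
def qfun (d : ℕ) (α δ c₀ : ℝ) (ξ : Ed d) (z : Ed d) : ℝ :=
  if ‖z‖ ≤ 1 ∧ δ * ‖z‖ ≤ ⟪z, ξ⟫ then c₀ * ‖z‖ ^ (-((d : ℝ) + α)) else 0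

lemma qfun_nonneg (d : ℕ) {α δ c₀ : ℝ} (hc₀ : 0 ≤ c₀) (ξ z : Ed d) :
    0 ≤ qfun d α δ c₀ ξ z := by
  unfold qfun; split
  · positivity
  · exact le_rfl

lemma qfun_measurable (d : ℕ) (α δ c₀ : ℝ) (ξ : Ed d) :
    Measurable (qfun d α δ c₀ ξ) := by
  unfold qfun
  apply Measurable.ite
  · have h1 : IsClosed {z : Ed d | ‖z‖ ≤ 1} := isClosed_le continuous_norm continuous_const
    have h2 : IsClosed {z : Ed d | δ * ‖z‖ ≤ ⟪z, ξ⟫} :=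
      isClosed_le (continuous_const.mul continuous_norm)
        (continuous_id.inner continuous_const)
    exact (h1.inter h2).measurableSet
  · exact (measurable_norm.pow measurable_const).const_mul c₀
  · exact measurable_const

/-- upper bound for qfun -/
lemma qfun_le (d : ℕ) {α δ c₀ t : ℝ} (hc₀ : 0 ≤ c₀) (hβ : 0 ≤ (d : ℝ) + α)
    (ξ z : Ed d) (ht : 0 < t) (htz : t ≤ ‖z‖) :
    qfun d α δ c₀ ξ z ≤ c₀ * t ^ (-((d : ℝ) + α)) := by
  unfold qfun; split
  · exact mul_le_mul_of_nonneg_left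
      (Real.rpow_le_rpow_of_nonpos ht htz (neg_nonpos.mpr hβ)) hc₀
  · positivity

/-- lower bound for qfun -/
lemma qfun_ge (d : ℕ) {α δ c₀ s : ℝ} (hc₀ : 0 ≤ c₀) (hβ : 0 ≤ (d : ℝ) + α)
    (ξ : Ed d) {z : Ed d} (hcond : ‖z‖ ≤ 1 ∧ δ * ‖z‖ ≤ ⟪z, ξ⟫)
    (hz : 0 < ‖z‖) (hzs : ‖z‖ ≤ s) :
    c₀ * s ^ (-((d : ℝ) + α)) ≤ qfun d α δ c₀ ξ z := by
  unfold qfun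
  rw [if_pos hcond]
  exact mul_le_mul_of_nonneg_left
    (Real.rpow_le_rpow_of_nonpos hz hzs (neg_nonpos.mpr hβ)) hc₀

set_option maxHeartbeats 1000000 in
/-- there are `c₁ > 0` and `r₀ ∈ (0,1)` such that for all `x` with
`0 < |x| ≤ r₀`, `∫ min(q(z), q(x+z)) dz ≥ c₁ |x|^{−α}` (Lebesgue integral). -/
theorem statement14 {d : ℕ} (hd : 1 ≤ d) (α : ℝ) (hα0 : 0 < α) (hα2 : α < 2)
    (δ : ℝ) (hδ0 : 0 < δ) (hδ1 : δ < 1) (c₀ : ℝ) (hc₀ : 0 < c₀)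
    (ξ : Ed d) (hξ : ‖ξ‖ = 1) :
    ∃ c₁ : ℝ, 0 < c₁ ∧ ∃ r₀ : ℝ, 0 < r₀ ∧ r₀ < 1 ∧
      ∀ x : Ed d, 0 < ‖x‖ → ‖x‖ ≤ r₀ →
        c₁ * ‖x‖ ^ (-α) ≤ ∫ z : Ed d, min (qfun d α δ c₀ ξ z) (qfun d α δ c₀ ξ (x + z)) := by
  have hβ : (0:ℝ) < (d : ℝ) + α := by positivity
  set β : ℝ := (d : ℝ) + α with hβdef
  set δ' : ℝ := (1 + δ) / 2 with hδ'def
  have hδδ' : δ < δ' := by rw [hδ'def]; linarith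
  have hδ'1 : δ' < 1 := by rw [hδ'def]; linarith
  have hδ'0 : 0 < δ' := by linarith
  set K : ℝ := 2 * (1 + δ) / (1 - δ) with hKdef
  have hK2 : 2 < K := by
    rw [hKdef, lt_div_iff₀ (by linarith)]; nlinarith
  have hK0 : (0:ℝ) < K := by linarith
  set S₁ : Set (Ed d) := {z | 1 ≤ ‖z‖ ∧ ‖z‖ ≤ 2 ∧ δ' * ‖z‖ ≤ ⟪z, ξ⟫} with hS₁def
  have hS₁meas : MeasurableSet S₁ := by
    have h1 : IsClosed {z : Ed d | 1 ≤ ‖z‖} := isClosed_le continuous_const continuous_norm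
    have h2 : IsClosed {z : Ed d | ‖z‖ ≤ 2} := isClosed_le continuous_norm continuous_const
    have h3 : IsClosed {z : Ed d | δ' * ‖z‖ ≤ ⟪z, ξ⟫} :=
      isClosed_le (continuous_const.mul continuous_norm)
        (continuous_id.inner continuous_const)
    exact ((h1.inter (h2.inter h3)).measurableSet)
  have hV0 : 0 < volume S₁ := by
    have hUopen : IsOpen {z : Ed d | 1 < ‖z‖ ∧ ‖z‖ < 2 ∧ δ' * ‖z‖ < ⟪z, ξ⟫} := by
      have h1 : IsOpen {z : Ed d | 1 < ‖z‖} := isOpen_lt continuous_const continuous_norm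
      have h2 : IsOpen {z : Ed d | ‖z‖ < 2} := isOpen_lt continuous_norm continuous_const
      have h3 : IsOpen {z : Ed d | δ' * ‖z‖ < ⟪z, ξ⟫} :=
        isOpen_lt (continuous_const.mul continuous_norm)
          (continuous_id.inner continuous_const)
      exact h1.inter (h2.inter h3)
    have hmem : ((3:ℝ)/2) • ξ ∈ {z : Ed d | 1 < ‖z‖ ∧ ‖z‖ < 2 ∧ δ' * ‖z‖ < ⟪z, ξ⟫} := by
      have hn : ‖((3:ℝ)/2) • ξ‖ = 3/2 := by
        rw [norm_smul, hξ]; norm_num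
      have hi : ⟪((3:ℝ)/2) • ξ, ξ⟫ = 3/2 := by
        rw [real_inner_smul_left, real_inner_self_eq_norm_sq, hξ]; norm_num
      refine ⟨by rw [hn]; norm_num, by rw [hn]; norm_num, ?_⟩
      rw [hn, hi]; nlinarith
    have := hUopen.measure_pos volume ⟨_, hmem⟩
    refine lt_of_lt_of_le this (measure_mono ?_)
    intro z hz; exact ⟨hz.1.le, hz.2.1.le, hz.2.2.le⟩
  have hVfin : volume S₁ ≠ ⊤ := by
    refine (lt_of_le_of_lt (measure_mono ?_) (measure_closedBall_lt_top (x := (0:Ed d)) (r := 2))).ne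
    intro z hz; rw [Metric.mem_closedBall, dist_zero_right]; exact hz.2.1
  set V : ℝ := (volume S₁).toReal with hVdef
  have hVpos : 0 < V := ENNReal.toReal_pos hV0.ne' hVfin
  have h3K : (0:ℝ) < 3 * K := by linarith
  refine ⟨c₀ * (3*K) ^ (-β) * K ^ d * V, ?_, 1/(4*K), by positivity, ?_, ?_⟩
  · have := Real.rpow_pos_of_pos h3K (-β)
    positivity
  · rw [div_lt_one (by linarith)]; linarith
  intro x hx hxr
  set r : ℝ := K * ‖x‖ with hrdef
  have hr : 0 < r := mul_pos hK0 hx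
  have hr14 : r ≤ 1/4 := by
    calc r = K * ‖x‖ := rfl
    _ ≤ K * (1/(4*K)) := mul_le_mul_of_nonneg_left hxr hK0.le
    _ = 1/4 := by field_simp
  set S : Set (Ed d) := r • S₁ with hSdef
  have hSmeas : MeasurableSet S := hS₁meas.const_smul₀ r
  have hvolS : volume S = ENNReal.ofReal (r ^ d) * volume S₁ := by
    rw [hSdef, Measure.addHaar_smul, finrank_euclideanSpace, Fintype.card_fin,
      abs_of_nonneg (by positivity)]
  have hvolSfin : volume S ≠ ⊤ := by
    rw [hvolS]; exact ENNReal.mul_ne_top ENNReal.ofReal_ne_top hVfin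
  have hvolStoReal : (volume S).toReal = r ^ d * V := by
    rw [hvolS, ENNReal.toReal_mul, ENNReal.toReal_ofReal (by positivity), hVdef]
  set F : Ed d → ℝ := fun z => min (qfun d α δ c₀ ξ z) (qfun d α δ c₀ ξ (x + z)) with hFdef
  have hFmeas : Measurable F :=
    (qfun_measurable d α δ c₀ ξ).min
      ((qfun_measurable d α δ c₀ ξ).comp (measurable_const.add measurable_id))
  have hFnonneg : ∀ z, 0 ≤ F z := fun z =>
    le_min (qfun_nonneg d hc₀.le ξ z) (qfun_nonneg d hc₀.le ξ (x + z))
  set M : ℝ := c₀ * (‖x‖/2) ^ (-β) with hMdef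
  have hFbound : ∀ z, F z ≤ M := by
    intro z
    rcases le_or_gt (‖x‖/2) ‖z‖ with h | h
    · exact le_trans (min_le_left _ _) (qfun_le d hc₀.le hβ.le ξ z (by linarith) h)
    · refine le_trans (min_le_right _ _) (qfun_le d hc₀.le hβ.le ξ (x+z) (by linarith) ?_)
      have : ‖x‖ - ‖z‖ ≤ ‖x + z‖ := by
        have h := norm_sub_norm_le x (-z)
        rw [sub_neg_eq_add, norm_neg] at h
        exact h
      linarith
  have hFzero : ∀ z : Ed d, 1 < ‖z‖ → F z = 0 := by
    intro z hz
    have hq : qfun d α δ c₀ ξ z = 0 := by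
      unfold qfun; rw [if_neg]; rintro ⟨h1, -⟩; linarith
    rw [hFdef]; simp only
    rw [hq, min_eq_left (qfun_nonneg d hc₀.le ξ (x+z))]
  have hFint : Integrable F := by
    apply Integrable.mono' (g := (Metric.closedBall (0:Ed d) 1).indicator (fun _ => M))
    · exact (integrable_indicator_iff measurableSet_closedBall).2
        (integrableOn_const measure_closedBall_lt_top.ne)
    · exact hFmeas.aestronglyMeasurable
    · refine Filter.Eventually.of_forall fun z => ?_
      rw [Real.norm_of_nonneg (hFnonneg z)]
      rcases le_or_gt ‖z‖ 1 with hz | hz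
      · rw [indicator_of_mem (by rwa [Metric.mem_closedBall, dist_zero_right])]
        exact hFbound z
      · rw [indicator_of_notMem (by rw [Metric.mem_closedBall, dist_zero_right]; linarith),
          hFzero z hz]
  have hlow : ∀ z ∈ S, c₀ * (3 * K * ‖x‖) ^ (-β) ≤ F z := by
    intro z hz
    obtain ⟨w, hw, rfl⟩ := hz
    obtain ⟨hw1, hw2, hw3⟩ := hw
    have hnz : ‖r • w‖ = r * ‖w‖ := by
      rw [norm_smul, Real.norm_of_nonneg hr.le]
    have hz1 : r ≤ ‖r • w‖ := by
      rw [hnz]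
      calc r = r * 1 := (mul_one r).symm
      _ ≤ r * ‖w‖ := mul_le_mul_of_nonneg_left hw1 hr.le
    have hz2 : ‖r • w‖ ≤ 2 * r := by
      rw [hnz]
      calc r * ‖w‖ ≤ r * 2 := mul_le_mul_of_nonneg_left hw2 hr.le
      _ = 2 * r := mul_comm r 2
    have hzpos : 0 < ‖r • w‖ := lt_of_lt_of_le hr hz1
    have hinner : δ' * ‖r • w‖ ≤ ⟪r • w, ξ⟫ := by
      rw [real_inner_smul_left, hnz]
      calc δ' * (r * ‖w‖) = r * (δ' * ‖w‖) := by ring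
      _ ≤ r * ⟪w, ξ⟫ := mul_le_mul_of_nonneg_left hw3 hr.le
    have h3r : 3 * K * ‖x‖ = 3 * r := by rw [hrdef]; ring
    have hcond1 : ‖r • w‖ ≤ 1 ∧ δ * ‖r • w‖ ≤ ⟪r • w, ξ⟫ := by
      constructor
      · linarith
      · nlinarith [norm_nonneg (r • w)]
    have hxz_ub : ‖x + r • w‖ ≤ 3 * r := by
      have := norm_add_le x (r • w)
      have hxK : ‖x‖ ≤ r := by rw [hrdef]; nlinarith
      linarith
    have hxz_lb : r - ‖x‖ ≤ ‖x + r • w‖ := by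
      have h := norm_sub_norm_le (r • w) (-x)
      rw [sub_neg_eq_add, norm_neg, add_comm] at h
      linarith
    have hxzpos : 0 < ‖x + r • w‖ := by
      have hxK : ‖x‖ < r := by rw [hrdef]; nlinarith
      linarith
    have hcond2 : ‖x + r • w‖ ≤ 1 ∧ δ * ‖x + r • w‖ ≤ ⟪x + r • w, ξ⟫ := by
      constructor
      · linarith
      · have hiadd : ⟪x + r • w, ξ⟫ = ⟪x, ξ⟫ + ⟪r • w, ξ⟫ := inner_add_left x (r • w) ξ
        have hax : -‖x‖ ≤ ⟪x, ξ⟫ := by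
          have := abs_real_inner_le_norm x ξ
          rw [hξ, mul_one] at this
          cases' abs_le.mp this with h1 h2
          linarith
        have hub : ‖x + r • w‖ ≤ ‖x‖ + ‖r • w‖ := norm_add_le _ _
        have hKz : K * ‖x‖ ≤ ‖r • w‖ := by rw [← hrdef]; exact hz1
        have hKey : (1 + δ) * ‖x‖ ≤ (δ' - δ) * ‖r • w‖ := by
          have hδ'δ : δ' - δ = (1 - δ) / 2 := by rw [hδ'def]; ring
          have h1δ : (1:ℝ) - δ ≠ 0 := by linarith
          have hKval : (1 - δ) / 2 * K = 1 + δ := by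
            rw [hKdef]; field_simp
          rw [hδ'δ]
          calc (1 + δ) * ‖x‖ = (1 - δ) / 2 * (K * ‖x‖) := by rw [← hKval]; ring
          _ ≤ (1 - δ) / 2 * ‖r • w‖ :=
            mul_le_mul_of_nonneg_left hKz (by linarith)
        rw [hiadd]
        nlinarith
    have hq1 : c₀ * (3 * K * ‖x‖) ^ (-β) ≤ qfun d α δ c₀ ξ (r • w) := by
      refine qfun_ge d hc₀.le hβ.le ξ hcond1 hzpos ?_
      rw [h3r]; linarith
    have hq2 : c₀ * (3 * K * ‖x‖) ^ (-β) ≤ qfun d α δ c₀ ξ (x + r • w) := by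
      refine qfun_ge d hc₀.le hβ.le ξ hcond2 hxzpos ?_
      rw [h3r]; linarith
    exact le_min hq1 hq2
  have hstep1 : c₀ * (3 * K * ‖x‖) ^ (-β) * (volume S).toReal ≤ ∫ z in S, F z :=
    setIntegral_ge_of_const_le_real hSmeas hvolSfin hlow hFint.integrableOn
  have hstep2 : ∫ z in S, F z ≤ ∫ z, F z :=
    setIntegral_le_integral hFint (Filter.Eventually.of_forall hFnonneg)
  have key : c₀ * (3*K) ^ (-β) * K ^ d * V * ‖x‖ ^ (-α)
      = c₀ * (3 * K * ‖x‖) ^ (-β) * ((volume S).toReal) := by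
    rw [hvolStoReal, Real.mul_rpow h3K.le (norm_nonneg x), hrdef, mul_pow]
    have hxd : ‖x‖ ^ (-β) * ‖x‖ ^ (d:ℕ) = ‖x‖ ^ (-α) := by
      rw [← Real.rpow_natCast ‖x‖ d, ← Real.rpow_add hx]
      congr 1
      rw [hβdef]; ring
    calc c₀ * (3*K) ^ (-β) * K ^ d * V * ‖x‖ ^ (-α)
        = c₀ * (3*K) ^ (-β) * K ^ d * V * (‖x‖ ^ (-β) * ‖x‖ ^ (d:ℕ)) := by rw [hxd]
    _ = c₀ * ((3*K) ^ (-β) * ‖x‖ ^ (-β)) * (K ^ d * ‖x‖ ^ (d:ℕ) * V) := by ring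
  calc c₀ * (3*K) ^ (-β) * K ^ d * V * ‖x‖ ^ (-α)
      = c₀ * (3 * K * ‖x‖) ^ (-β) * ((volume S).toReal) := key
  _ ≤ ∫ z in S, F z := hstep1
  _ ≤ ∫ z, F z := hstep2

end
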